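/- Affine Tverberg theorem (reformulation): Let r ≥ 1, d ≥ 1, N = (r−1)(d+1), and m = N + 1. Then for every affine map f : stdSimplex ℝ (Fin m) → ℝ^d (i.e., the restriction to the standard simplex of an affine map from ℝ^m to ℝ^d) there exist r nonempty pairwise disjoint finsets Δ_1, …, Δ_r of Fin m such that ⋂_{i=1}^r f(Face(Δ_i)) ≠ ∅. -/

import Mathlib

/-!
Sarkaria's proof via Bárány's colorful Carathéodory theorem. Give vertex `j`, with image
`a j = F (e j)`, the lifted point `(1, a j) ∈ ℝ^{d+1}`, and each of the `r` colours a vector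
`v i ∈ ℝ^{r-1}`, where the `v i` sum to zero and every linear relation among them has equal
coefficients. The `r` tensors `v i ⊗ (1, a j)` then have `0` in their convex hull, so by colorful
Carathéodory in dimension `(r-1)(d+1) = N` some choice of one colour `σ j` per vertex still has
`0` in its convex hull. Grouping a convex relation `∑ λ j • v (σ j) ⊗ (1, a j) = 0` by colour
forces every colour class to carry the same mass and the same moment `∑ λ j • a j`, so the
centres of mass of the colour classes coincide.

Colorful Carathéodory itself: pick a transversal whose convex hull is closest to `0`. If that
distance is positive, the nearest point `q` lies on a face spanned by at most `dim` of its points,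
so one colour is free; replacing its point by one beyond the hyperplane through `q` orthogonal to
`q` moves the hull strictly closer to `0`.
-/

/-- The face of the standard simplex spanned by the vertex set `A`. -/
def simplexFace {m : ℕ} (A : Finset (Fin m)) : Set (stdSimplex ℝ (Fin m)) :=
  {x | Function.support (x : Fin m → ℝ) ⊆ ↑A}

open Set Finset Module Metric
open scoped RealInnerProductSpace

section ConvexHull

variable {R E : Type*} [Field R] [LinearOrder R] [IsStrictOrderedRing R] [AddCommGroup E]
  [Module R E]

lemma exists_weights_of_mem_convexHull_range {ι : Type*} [Fintype ι] {v : ι → E} {x : E}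
    (hx : x ∈ convexHull R (range v)) :
    ∃ w : ι → R, (∀ i, 0 ≤ w i) ∧ ∑ i, w i = 1 ∧ ∑ i, w i • v i = x := by
  classical
  rw [convexHull_range_eq_exists_affineCombination] at hx
  obtain ⟨s, w, hw₀, hw₁, rfl⟩ := hx
  refine ⟨fun i => if i ∈ s then w i else 0, fun i => ?_, ?_, ?_⟩
  · dsimp only
    split_ifs with h
    exacts [hw₀ i h, le_rfl]
  · rw [sum_ite_mem, Finset.univ_inter, hw₁]
  · simp_rw [s.affineCombination_eq_linear_combination _ _ hw₁, ite_smul, zero_smul,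
      sum_ite_mem, Finset.univ_inter]

lemma zero_mem_convexHull_range_of_sum_eq_zero {κ : Type*} [Fintype κ] [Nonempty κ]
    {x : κ → E} (hx : ∑ i, x i = 0) : (0 : E) ∈ convexHull R (range x) :=
  mem_convexHull_of_exists_fintype (fun _ => (Fintype.card κ : R)⁻¹) x (fun _ => by positivity)
    (by simp) (fun i => mem_range_self i) (by rw [← smul_sum, hx, smul_zero])

end ConvexHull

section ColorfulCaratheodory

variable {F : Type*} [NormedAddCommGroup F] [InnerProductSpace ℝ F]

lemma Convex.exists_norm_lt_of_inner_lt {K : Set F} (hK : Convex ℝ K) {q z : F} (hq : q ∈ K)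
    (hz : z ∈ K) (h : ⟪q, z⟫ < ‖q‖ ^ 2) : ∃ w ∈ K, ‖w‖ < ‖q‖ := by
  by_contra! hmin
  have : Nonempty K := ⟨⟨q, hq⟩⟩
  have hq_min : ‖0 - q‖ = ⨅ w : K, ‖0 - (w : F)‖ := by
    simp only [zero_sub, norm_neg]
    exact le_antisymm (le_ciInf fun w => hmin w w.2)
      (ciInf_le ⟨0, by rintro _ ⟨w, rfl⟩; positivity⟩ (⟨q, hq⟩ : K))
  have := (norm_eq_iInf_iff_real_inner_le_zero hK hq).1 hq_min z hz
  rw [zero_sub, inner_neg_left, inner_sub_right, real_inner_self_eq_norm_sq] at this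
  linarith

lemma AffineIndependent.card_le_finrank_of_inner_eq [FiniteDimensional ℝ F] {ι : Type*}
    [Fintype ι] {p : ι → F} (hp : AffineIndependent ℝ p) {q : F} (hq : q ≠ 0) {c : ℝ}
    (hpc : ∀ i, ⟪q, p i⟫ = c) : Fintype.card ι ≤ finrank ℝ F := by
  have hspan : vectorSpan ℝ (range p) ≤ (ℝ ∙ q)ᗮ := by
    rw [vectorSpan_def, Submodule.span_le]
    rintro _ ⟨_, ⟨i, rfl⟩, _, ⟨j, rfl⟩, rfl⟩
    simp [Submodule.mem_orthogonal_singleton_iff_inner_right, inner_sub_right, hpc]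
  have hdim := Submodule.finrank_add_finrank_orthogonal (ℝ ∙ q)
  rw [finrank_span_singleton hq] at hdim
  have := Submodule.finrank_mono hspan
  have := hp.card_le_finrank_succ
  omega

lemma exists_forall_mem_convexHull_range_update [FiniteDimensional ℝ F] {ι : Type*} [Fintype ι]
    [DecidableEq ι] (hι : finrank ℝ F < Fintype.card ι) {g : ι → F} {q : F}
    (hq : q ∈ convexHull ℝ (range g)) (hq₀ : q ≠ 0)
    (hface : ∀ w ∈ convexHull ℝ (range g), ‖q‖ ^ 2 ≤ ⟪q, w⟫) :
    ∃ j₀, ∀ z, q ∈ convexHull ℝ (range (Function.update g j₀ z)) := by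
  obtain ⟨κ, _, t, μ, ht, ht_indep, hμ₀, hμ₁, hμq⟩ := eq_pos_convex_span_of_mem_convexHull hq
  -- `q` is a positive combination of the `t i`, all in the half-space `‖q‖² ≤ ⟪q, ·⟫`.
  have ht_face : ∀ i, ⟪q, t i⟫ = ‖q‖ ^ 2 := by
    have hle : ∀ i ∈ Finset.univ, μ i * ‖q‖ ^ 2 ≤ μ i * ⟪q, t i⟫ := fun i _ =>
      mul_le_mul_of_nonneg_left (hface _ (subset_convexHull ℝ _ (ht ⟨i, rfl⟩))) (hμ₀ i).le
    have hsum : ∑ i, μ i * ‖q‖ ^ 2 = ∑ i, μ i * ⟪q, t i⟫ := by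
      rw [← sum_mul, hμ₁, one_mul, ← real_inner_self_eq_norm_sq]
      calc ⟪q, q⟫ = ⟪q, ∑ i, μ i • t i⟫ := by rw [hμq]
        _ = ∑ i, μ i * ⟪q, t i⟫ := by simp [inner_sum, real_inner_smul_right]
    intro i
    exact (mul_left_cancel₀ (hμ₀ i).ne' (((sum_eq_sum_iff_of_le hle).1 hsum) i (mem_univ i))).symm
  choose col hcol using fun i => ht ⟨i, rfl⟩
  obtain ⟨j₀, hj₀⟩ : ∃ j₀, ∀ i, col i ≠ j₀ := by
    by_contra! hsurj
    have := Fintype.card_le_of_surjective col hsurj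
    have := ht_indep.card_le_finrank_of_inner_eq hq₀ ht_face
    omega
  refine ⟨j₀, fun z => ?_⟩
  rw [← hμq]
  refine mem_convexHull_of_exists_fintype μ t (fun i => (hμ₀ i).le) hμ₁ (fun i => ⟨col i, ?_⟩) rfl
  rw [Function.update_of_ne (hj₀ i), hcol]

theorem exists_colorful_zero_mem_convexHull [FiniteDimensional ℝ F] {ι : Type*} [Fintype ι]
    (hι : finrank ℝ F < Fintype.card ι) (C : ι → Finset F)
    (hC : ∀ j, (0 : F) ∈ convexHull ℝ (C j : Set F)) :
    ∃ g : ι → F, (∀ j, g j ∈ C j) ∧ (0 : F) ∈ convexHull ℝ (range g) := by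
  classical
  have : Nonempty ι := Fintype.card_pos_iff.1 (by omega)
  have hT : (Fintype.piFinset C).Nonempty := Fintype.piFinset_nonempty.2 fun j =>
    Finset.coe_nonempty.1 (convexHull_nonempty_iff.1 ⟨0, hC j⟩)
  obtain ⟨g, hgC, hgmin⟩ :=
    (Fintype.piFinset C).exists_min_image (fun g => infDist 0 (convexHull ℝ (range g))) hT
  refine ⟨g, Fintype.mem_piFinset.1 hgC, ?_⟩
  by_contra h₀
  obtain ⟨q, hqK, hq⟩ := ((finite_range g).isCompact_convexHull ℝ).exists_infDist_eq_dist
    ((range_nonempty g).convexHull) 0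
  have hq₀ : q ≠ 0 := by rintro rfl; exact h₀ hqK
  have hmin : ∀ g' ∈ Fintype.piFinset C, ∀ w ∈ convexHull ℝ (range g'), ‖q‖ ≤ ‖w‖ :=
    fun g' hg' w hw => calc
      ‖q‖ = infDist 0 (convexHull ℝ (range g)) := by rw [hq, dist_zero_left]
      _ ≤ infDist 0 (convexHull ℝ (range g')) := hgmin g' hg'
      _ ≤ ‖w‖ := by simpa using infDist_le_dist_of_mem hw (x := 0)
  have hface : ∀ w ∈ convexHull ℝ (range g), ‖q‖ ^ 2 ≤ ⟪q, w⟫ := fun w hw => by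
    by_contra! hlt
    obtain ⟨w', hw', hlt'⟩ := (convex_convexHull ℝ _).exists_norm_lt_of_inner_lt hqK hw hlt
    exact hlt'.not_ge (hmin g hgC w' hw')
  obtain ⟨j₀, hj₀⟩ := exists_forall_mem_convexHull_range_update hι hqK hq₀ hface
  obtain ⟨z, hzC, hz⟩ : ∃ z ∈ C j₀, ⟪q, z⟫ < ‖q‖ ^ 2 := by
    by_contra! hge
    have h0 : ‖q‖ ^ 2 ≤ ⟪q, (0 : F)⟫ := convexHull_min (t := {w | ‖q‖ ^ 2 ≤ ⟪q, w⟫}) hge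
      (convex_halfSpace_ge (innerₛₗ ℝ q).isLinear _) (hC j₀)
    rw [inner_zero_right] at h0
    exact hq₀ (norm_eq_zero.1 (by nlinarith [norm_nonneg q]))
  have hg' : Function.update g j₀ z ∈ Fintype.piFinset C := by
    rw [Fintype.mem_piFinset]
    intro j
    rcases eq_or_ne j j₀ with rfl | hj
    · simpa using hzC
    · simpa [hj] using Fintype.mem_piFinset.1 hgC j
  obtain ⟨w, hw, hlt⟩ := (convex_convexHull ℝ _).exists_norm_lt_of_inner_lt (hj₀ z)
    (subset_convexHull ℝ _ ⟨j₀, Function.update_self ..⟩) hz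
  exact hlt.not_ge (hmin _ hg' w hw)

end ColorfulCaratheodory

section Tverberg

variable {ι κ : Type*} [DecidableEq κ]

lemma iInter_convexHull_nonempty_of_fiberwise_sum_eq [Fintype ι] [Fintype κ] {E : Type*}
    [AddCommGroup E] [Module ℝ E] {a : ι → E} {σ : ι → κ} {w : ι → ℝ} (hw₀ : ∀ j, 0 ≤ w j)
    (hw₁ : ∑ j, w j = 1) (i₀ : κ)
    (hmass : ∀ i, ∑ j with σ j = i, w j = ∑ j with σ j = i₀, w j)
    (hmoment : ∀ i, ∑ j with σ j = i, w j • a j = ∑ j with σ j = i₀, w j • a j) :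
    (⋂ i, convexHull ℝ (a '' (σ ⁻¹' {i}))).Nonempty := by
  have hpos : 0 < ∑ j with σ j = i₀, w j := by
    refine (sum_nonneg fun j _ => hw₀ j).lt_of_ne fun h => ?_
    have := sum_fiberwise univ σ w
    simp [hmass, ← h, hw₁] at this
  refine ⟨({j | σ j = i₀} : Finset ι).centerMass w a, mem_iInter.2 fun i => ?_⟩
  have hcenter : ({j | σ j = i} : Finset ι).centerMass w a =
      ({j | σ j = i₀} : Finset ι).centerMass w a := by
    simp only [centerMass, hmass i, hmoment i]
  rw [← hcenter]
  exact centerMass_mem_convexHull _ (fun j _ => hw₀ j) (hmass i ▸ hpos)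
    fun j hj => mem_image_of_mem a (by simpa using hj)

variable {d : ℕ}

/-- Sarkaria's lift `v i ⊗ (1, a j)` of vertex `j` with colour `i`. The colour vector
`v i = e i - e i₀` has coordinates indexed by the colours other than `i₀`, so `v i₀ = -𝟙`:
the `v i` sum to zero, and `∑ c i • v i = 0` forces all `c i` to be equal. -/
def sarkariaLift (i₀ : κ) (a : ι → EuclideanSpace ℝ (Fin d)) (j : ι) (i : κ) :
    EuclideanSpace ℝ ({i // i ≠ i₀} × Fin (d + 1)) :=
  WithLp.toLp 2 fun p =>
    ((if i = p.1 then 1 else 0) - (if i = i₀ then 1 else 0)) * Matrix.vecCons 1 (a j).ofLp p.2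

lemma sum_sarkariaLift [Fintype κ] (i₀ : κ) (a : ι → EuclideanSpace ℝ (Fin d)) (j : ι) :
    ∑ i, sarkariaLift i₀ a j i = 0 := by
  ext p
  simp [sarkariaLift, sub_mul, sum_sub_distrib, ite_mul]

lemma sum_smul_sarkariaLift_apply [Fintype ι] (i₀ : κ) (a : ι → EuclideanSpace ℝ (Fin d))
    (w : ι → ℝ) (σ : ι → κ) (p : {i // i ≠ i₀} × Fin (d + 1)) :
    (∑ j, w j • sarkariaLift i₀ a j (σ j)) p =
      ∑ j with σ j = p.1, w j * Matrix.vecCons 1 (a j).ofLp p.2 -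
        ∑ j with σ j = i₀, w j * Matrix.vecCons 1 (a j).ofLp p.2 := by
  simp [sarkariaLift, sum_filter, mul_sub, sub_mul, sum_sub_distrib, ite_mul, mul_ite]

end Tverberg

theorem exists_tverberg_partition {ι κ : Type*} [Fintype ι] [Fintype κ] [Nonempty κ] {d : ℕ}
    (a : ι → EuclideanSpace ℝ (Fin d)) (h : (Fintype.card κ - 1) * (d + 1) < Fintype.card ι) :
    ∃ σ : ι → κ, (⋂ i, convexHull ℝ (a '' (σ ⁻¹' {i}))).Nonempty := by
  classical
  obtain ⟨i₀⟩ := ‹Nonempty κ›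
  have hdim : finrank ℝ (EuclideanSpace ℝ ({i // i ≠ i₀} × Fin (d + 1))) < Fintype.card ι := by
    simpa using h
  obtain ⟨g, hgC, hg₀⟩ := exists_colorful_zero_mem_convexHull hdim
    (fun j => univ.image (sarkariaLift i₀ a j))
    fun j => by simpa using zero_mem_convexHull_range_of_sum_eq_zero (sum_sarkariaLift i₀ a j)
  choose σ hσ using fun j => by simpa using hgC j
  obtain ⟨w, hw₀, hw₁, hw⟩ :=
    exists_weights_of_mem_convexHull_range (v := fun j => sarkariaLift i₀ a j (σ j))
      (by simpa [hσ] using hg₀)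
  have hfiber (i : κ) (k : Fin (d + 1)) : ∑ j with σ j = i, w j * Matrix.vecCons 1 (a j).ofLp k =
      ∑ j with σ j = i₀, w j * Matrix.vecCons 1 (a j).ofLp k := by
    by_cases hi : i = i₀
    · rw [hi]
    have := congrArg (· (⟨i, hi⟩, k)) hw
    simpa [sum_smul_sarkariaLift_apply, sub_eq_zero] using this
  refine ⟨σ, iInter_convexHull_nonempty_of_fiberwise_sum_eq hw₀ hw₁ i₀
    (fun i => by simpa using hfiber i 0) fun i => ?_⟩
  ext k
  simpa using hfiber i k.succ

lemma convexHull_image_single_subset_image_simplexFace {m : ℕ} {P : Type*} [AddCommGroup P]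
    [Module ℝ P] (F : (Fin m → ℝ) →ᵃ[ℝ] P) (A : Finset (Fin m)) :
    convexHull ℝ ((fun j => F (Pi.single j 1)) '' A) ⊆
      (fun x : stdSimplex ℝ (Fin m) => F x) '' simplexFace A := by
  have hface : convexHull ℝ ((fun j => (Pi.single j 1 : Fin m → ℝ)) '' A) ⊆
      stdSimplex ℝ (Fin m) ∩ {x | ∀ j ∉ A, x j = 0} := by
    refine convexHull_min ?_ ((convex_stdSimplex ℝ _).inter fun x hx y hy a b _ _ _ j hj => by
      simp [hx j hj, hy j hj])
    rintro _ ⟨j, hj, rfl⟩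
    exact ⟨single_mem_stdSimplex ℝ j, fun k hk => Pi.single_eq_of_ne (by rintro rfl; exact hk hj) _⟩
  rw [← image_image F, ← F.image_convexHull]
  rintro _ ⟨x, hx, rfl⟩
  exact ⟨⟨x, (hface hx).1⟩, Function.support_subset_iff'.2 (hface hx).2, rfl⟩

theorem affine_tverberg_general
    (r d N m : ℕ) (hr : 1 ≤ r)
    (hN : N = (r - 1) * (d + 1)) (hm : m = N + 1)
    (F : (Fin m → ℝ) →ᵃ[ℝ] EuclideanSpace ℝ (Fin d)) :
    ∃ Δ : Fin r → Finset (Fin m),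
      (∀ i, (Δ i).Nonempty) ∧
      (∀ i j, i ≠ j → Disjoint (Δ i) (Δ j)) ∧
      (⋂ i, (fun x : stdSimplex ℝ (Fin m) => F ↑x) '' simplexFace (Δ i)).Nonempty := by
  have : Nonempty (Fin r) := Fin.pos_iff_nonempty.1 hr
  obtain ⟨σ, p, hp⟩ := exists_tverberg_partition (κ := Fin r) (fun j : Fin m => F (Pi.single j 1))
    (by simp [hN, hm])
  rw [mem_iInter] at hp
  have hcoe_fiber (i : Fin r) :
      (({j | σ j = i} : Finset (Fin m)) : Set (Fin m)) = σ ⁻¹' {i} := by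
    ext; simp
  refine ⟨fun i => {j | σ j = i}, fun i => ?_, fun i i' hii' => ?_, p, mem_iInter.2 fun i => ?_⟩
  · obtain ⟨_, ⟨j, hj, rfl⟩⟩ := convexHull_nonempty_iff.1 ⟨p, hp i⟩
    exact ⟨j, by simpa using hj⟩
  · exact disjoint_filter.2 fun j _ hj hj' => hii' (hj ▸ hj')
  · exact convexHull_image_single_subset_image_simplexFace F _ (by rw [hcoe_fiber]; exact hp i)

/-- **Affine Tverberg theorem (reformulation).** -/
theorem affine_tverberg
    (r d N m : ℕ) (hr : 1 ≤ r) (hd : 1 ≤ d)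
    (hN : N = (r - 1) * (d + 1)) (hm : m = N + 1)
    (F : (Fin m → ℝ) →ᵃ[ℝ] EuclideanSpace ℝ (Fin d)) :
    ∃ Δ : Fin r → Finset (Fin m),
      (∀ i, (Δ i).Nonempty) ∧
      (∀ i j, i ≠ j → Disjoint (Δ i) (Δ j)) ∧
      (⋂ i, (fun x : stdSimplex ℝ (Fin m) => F ↑x) '' simplexFace (Δ i)).Nonempty :=
  affine_tverberg_general r d N m hr hN hm F
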